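/- Let G be a connected graph of diameter D with a resolving set W = {w_1,...,w_b}. Then for every 1 ≤ i ≤ b and every 1 ≤ k ≤ D, the number of vertices at distance exactly k from w_i is at most (2k+1)^{b-1}. -/

import Mathlib

open SimpleGraph

/-- `W` is a resolving set for `G`: vertices with equal distance vectors to `W` are equal. -/
def IsResolvingSet {V : Type*} (G : SimpleGraph V) (W : Set V) : Prop :=
  ∀ u v : V, (∀ w ∈ W, G.dist w u = G.dist w v) → u = v

/-- The metric dimension of `G`: the least cardinality of a resolving set. -/
noncomputable def metricDim {V : Type*} [Fintype V] (G : SimpleGraph V) : ℕ :=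
  sInf {n | ∃ W : Finset V, W.card = n ∧ IsResolvingSet G ↑W}

/-- The threshold dimension of `G`: the least metric dimension over spanning supergraphs. -/
noncomputable def thresholdDim {V : Type*} [Fintype V] (G : SimpleGraph V) : ℕ :=
  sInf {n | ∃ H : SimpleGraph V, G ≤ H ∧ metricDim H = n}

/-- The strong product of `k` copies of the path on `{0, …, n-1}`. -/
def strongPow (n k : ℕ) : SimpleGraph (Fin k → Fin n) where
  Adj x y := x ≠ y ∧ ∀ i, ((x i : ℤ) - (y i : ℤ)).natAbs ≤ 1
  symm := by
    refine ⟨?_⟩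
    rintro x y ⟨h1, h2⟩
    refine ⟨fun h => h1 h.symm, fun i => ?_⟩
    rw [show (y i : ℤ) - (x i : ℤ) = -((x i : ℤ) - (y i : ℤ)) by ring, Int.natAbs_neg]
    exact h2 i
  loopless := ⟨fun x ⟨h, _⟩ => h rfl⟩

/-!
Fix `u ∈ W` and a vertex `x` at distance `k` from `u`. By the triangle inequality,
for every other landmark `w ∈ W` the shifted distance `d(w, x) + k - d(w, u)` lies in
`{0, …, 2k}`, and together with `d(u, x) = k` these numbers determine the distance
vector of `x` to `W`. Since `W` is resolving, `x ↦ (d(w, x) + k - d(w, u))_{w ≠ u}`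
is injective on the sphere, which therefore has at most `(2k+1)^(|W|-1)` elements.
-/

namespace SimpleGraph

variable {V : Type*} {G : SimpleGraph V}

theorem Connected.dist_add_dist_sub_dist_le (hG : G.Connected) (u x w : V) :
    G.dist w x + G.dist u x - G.dist w u ≤ 2 * G.dist u x := by
  have := hG.dist_triangle (u := w) (v := u) (w := x)
  omega

theorem Connected.dist_le_dist_add_dist (hG : G.Connected) (u x w : V) :
    G.dist w u ≤ G.dist w x + G.dist u x := by
  rw [G.dist_comm (u := u)]
  exact hG.dist_triangle

variable [DecidableEq V]

noncomputable def sphereCode (G : SimpleGraph V) (W : Finset V) (u : V) (k : ℕ) (x : V) :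
    W.erase u → ℕ :=
  fun w => G.dist w x + k - G.dist w u

theorem sphereCode_mem_piFinset (hG : G.Connected) (W : Finset V) {u x : V} {k : ℕ}
    (hx : G.dist u x = k) :
    G.sphereCode W u k x ∈ Fintype.piFinset fun _ => Finset.range (2 * k + 1) := by
  refine Fintype.mem_piFinset.2 fun w => Finset.mem_range.2 ?_
  have := hG.dist_add_dist_sub_dist_le u x w
  simp only [sphereCode]
  omega

theorem IsResolvingSet.injOn_sphereCode (hG : G.Connected) {W : Finset V}
    (hW : IsResolvingSet G ↑W) {u : V} (k : ℕ) :
    Set.InjOn (G.sphereCode W u k) {x | G.dist u x = k} := by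
  intro x (hx : G.dist u x = k) y (hy : G.dist u y = k) hxy
  refine hW x y fun w hw => ?_
  obtain rfl | hwu := eq_or_ne w u
  · rw [hx, hy]
  have hcode := congrFun hxy ⟨w, Finset.mem_erase.2 ⟨hwu, hw⟩⟩
  have hxw := hG.dist_le_dist_add_dist u x w
  have hyw := hG.dist_le_dist_add_dist u y w
  simp only [sphereCode] at hcode
  omega

theorem IsResolvingSet.ncard_sphere_le (hG : G.Connected) {W : Finset V}
    (hW : IsResolvingSet G ↑W) {u : V} (hu : u ∈ W) (k : ℕ) :
    {x | G.dist u x = k}.ncard ≤ (2 * k + 1) ^ (W.card - 1) := by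
  calc {x | G.dist u x = k}.ncard
      ≤ (↑(Fintype.piFinset fun _ : W.erase u => Finset.range (2 * k + 1)) :
          Set (W.erase u → ℕ)).ncard :=
        Set.ncard_le_ncard_of_injOn _ (fun _ hx => sphereCode_mem_piFinset hG W hx)
          (hW.injOn_sphereCode hG k) (Finset.finite_toSet _)
    _ = (2 * k + 1) ^ (W.card - 1) := by
        rw [Set.ncard_coe_finset, Fintype.card_piFinset, Finset.prod_const, Finset.card_range,
          Finset.card_univ, Fintype.card_coe, Finset.card_erase_of_mem hu]

end SimpleGraph

theorem card_sphere_le_general {V : Type*} (G : SimpleGraph V) (hG : G.Connected)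
    (b : ℕ) (w : Fin b → V)
    (hres : IsResolvingSet G (Set.range w))
    (i : Fin b) (k : ℕ) :
    {x : V | G.dist (w i) x = k}.ncard ≤ (2 * k + 1) ^ (b - 1) := by
  classical
  set W := Finset.univ.image w
  have hW : IsResolvingSet G ↑W := by rwa [Finset.coe_image, Finset.coe_univ, Set.image_univ]
  have hcard : W.card ≤ b := Finset.card_image_le.trans_eq (Finset.card_fin b)
  calc {x : V | G.dist (w i) x = k}.ncard
      ≤ (2 * k + 1) ^ (W.card - 1) := hW.ncard_sphere_le hG (Finset.mem_image_of_mem w (Finset.mem_univ i)) k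
    _ ≤ (2 * k + 1) ^ (b - 1) := Nat.pow_le_pow_right (by omega) (by omega)

/-- If `G` is connected of diameter `D` with resolving set `{w 1, …, w b}`, then for
`1 ≤ k ≤ D` the number of vertices at distance exactly `k` from `w i` is at most
`(2k+1)^(b-1)`. -/
theorem card_sphere_le {V : Type*} [Fintype V] (G : SimpleGraph V) (hG : G.Connected)
    (D b : ℕ) (hD : G.diam = D) (w : Fin b → V) (hw : Function.Injective w)
    (hres : IsResolvingSet G (Set.range w))
    (i : Fin b) (k : ℕ) (hk1 : 1 ≤ k) (hkD : k ≤ D) :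
    {x : V | G.dist (w i) x = k}.ncard ≤ (2 * k + 1) ^ (b - 1) :=
  card_sphere_le_general G hG b w hres i k
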